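/- Let X̂₁ and X̂₂ be real random variables on a probability space which are (a, n)-concentrated around m₁ and m₂ respectively, where a > 0, n ≥ 1 and m₁ < m₂. Then P(X̂₁ ≥ X̂₂) ≤ 4·exp( −(n/4)·a·(m₂ − m₁)² ). -/

import Mathlib

open MeasureTheory Real

/-- A real random variable `X` on `(Ω, P)` is `(a, n)`-concentrated around `m` if
`P(|X − m| ≥ Δ) ≤ 2·exp(−a·n·Δ²)` for every `Δ > 0`. -/
def ConcentratedAround {Ω : Type*} [MeasurableSpace Ω] (P : Measure Ω)
    (a : ℝ) (n : ℕ) (X : Ω → ℝ) (m : ℝ) : Prop :=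
  ∀ Δ : ℝ, 0 < Δ →
    P {ω | Δ ≤ |X ω - m|} ≤ ENNReal.ofReal (2 * Real.exp (-(a * n * Δ ^ 2)))

/-!
If `X̂₂ ≤ X̂₁` while `m₁ < m₂`, then one of the two variables has strayed from its centre by at
least half the gap `(m₂ − m₁)/2`. A union bound and the two concentration inequalities at
`Δ = (m₂ − m₁)/2` give `2·exp(−a n Δ²) + 2·exp(−a n Δ²) = 4·exp(−(n/4)·a·(m₂ − m₁)²)`.
-/

lemma half_sub_le_abs_sub_or_half_sub_le_abs_sub {x₁ x₂ m₁ m₂ : ℝ} (h : x₂ ≤ x₁) :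
    (m₂ - m₁) / 2 ≤ |x₁ - m₁| ∨ (m₂ - m₁) / 2 ≤ |x₂ - m₂| := by
  by_contra! hfar
  obtain ⟨h₁, h₂⟩ := hfar
  rw [abs_lt] at h₁ h₂
  linarith [h₁.2, h₂.1]

lemma measure_le_le_add_measure_half_sub_le_abs {Ω : Type*} [MeasurableSpace Ω]
    (P : Measure Ω) (X₁ X₂ : Ω → ℝ) (m₁ m₂ : ℝ) :
    P {ω | X₂ ω ≤ X₁ ω} ≤
      P {ω | (m₂ - m₁) / 2 ≤ |X₁ ω - m₁|} + P {ω | (m₂ - m₁) / 2 ≤ |X₂ ω - m₂|} :=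
  (measure_mono fun _ hω => half_sub_le_abs_sub_or_half_sub_le_abs_sub hω).trans
    (measure_union_le _ _)

lemma two_mul_exp_add_two_mul_exp_half_sq (a n d : ℝ) :
    ENNReal.ofReal (2 * exp (-(a * n * (d / 2) ^ 2)))
        + ENNReal.ofReal (2 * exp (-(a * n * (d / 2) ^ 2)))
      = ENNReal.ofReal (4 * exp (-(n / 4 * (a * d ^ 2)))) := by
  rw [← ENNReal.ofReal_add (by positivity) (by positivity)]
  congr 1
  ring_nf

theorem prob_crossing_le {Ω : Type*} [MeasurableSpace Ω] (P : Measure Ω)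
    (a : ℝ) (n : ℕ)
    (m₁ m₂ : ℝ) (hm : m₁ < m₂) (X₁ X₂ : Ω → ℝ)
    (hX₁ : ConcentratedAround P a n X₁ m₁) (hX₂ : ConcentratedAround P a n X₂ m₂) :
    P {ω | X₂ ω ≤ X₁ ω}
      ≤ ENNReal.ofReal (4 * Real.exp (-((n : ℝ) / 4 * (a * (m₂ - m₁) ^ 2)))) := by
  have hgap : 0 < (m₂ - m₁) / 2 := by linarith
  calc P {ω | X₂ ω ≤ X₁ ω}
      ≤ P {ω | (m₂ - m₁) / 2 ≤ |X₁ ω - m₁|} + P {ω | (m₂ - m₁) / 2 ≤ |X₂ ω - m₂|} :=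
        measure_le_le_add_measure_half_sub_le_abs P X₁ X₂ m₁ m₂
    _ ≤ _ := add_le_add (hX₁ _ hgap) (hX₂ _ hgap)
    _ = _ := two_mul_exp_add_two_mul_exp_half_sq a n (m₂ - m₁)
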